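/- (Harmonicity of the flow force flux function.) Let γ be real and ε₁ > 0. Suppose η, ζ, ϑ : ℝ×[0,1] → ℝ are twice continuously differentiable on the closed strip, harmonic in R, vanish identically on B, and satisfy η_x² + η_y² > 0 everywhere on the closed strip. Define Φ(x,y) := ∫₀^y [ (η_y(ζ_y² − ζ_x²) + 2η_x ζ_x ζ_y)/(η_x² + η_y²) + ε₁·(η_y(ϑ_y² − ϑ_x²) + 2η_x ϑ_x ϑ_y)/(η_x² + η_y²) + (1 − γ²)·η_y + 2(γ − 1 − ε₁/2) ](x,t) dt. Then Φ is harmonic in R, and Φ = 0 on B. -/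

import Mathlib

/-!
Harmonicity forces `g = η_x - i η_y`, `h = ζ_x - i ζ_y` and `k = ϑ_x - i ϑ_y` to be holomorphic
in `R`, and `g ≠ 0`, so `H = (h² + ε₁ k²) / g + (1 - γ²) g` is holomorphic too. The integrand
`F` of `Φ` is `-Im H` plus a constant and `G = Re H` is its conjugate: `G_y = F_x`, `F_y = -G_x`
(checked below by the chain rule, without complex analysis). As `η_x`, `ζ_x`, `ϑ_x` vanish on
`B`, so does `G`; hence `Φ_x = ∫₀^y F_x = ∫₀^y G_y = G` and `Φ_y = F`, and
`Φ_xx + Φ_yy = G_x + F_y = 0`.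
-/

open Set Filter Topology

/-- The closed strip `ℝ × [0,1]`. -/
def strip : Set (ℝ × ℝ) := {p : ℝ × ℝ | p.2 ∈ Set.Icc (0 : ℝ) 1}

/-- The open strip `R = ℝ × (0,1)`. -/
def stripO : Set (ℝ × ℝ) := {p : ℝ × ℝ | p.2 ∈ Set.Ioo (0 : ℝ) 1}

/-- Partial derivative in the first (horizontal) variable, taken within the closed strip
(at interior points it agrees with the usual partial derivative; on the boundary it is
the one-sided partial derivative). -/
noncomputable def pdx (f : ℝ × ℝ → ℝ) (p : ℝ × ℝ) : ℝ := fderivWithin ℝ f strip p (1, 0)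

/-- Partial derivative in the second (vertical) variable, taken within the closed strip. -/
noncomputable def pdy (f : ℝ × ℝ → ℝ) (p : ℝ × ℝ) : ℝ := fderivWithin ℝ f strip p (0, 1)

lemma isOpen_stripO : IsOpen stripO := isOpen_Ioo.preimage continuous_snd

lemma stripO_subset_strip : stripO ⊆ strip := fun _ hp => Ioo_subset_Icc_self hp

lemma strip_mem_nhds {p : ℝ × ℝ} (hp : p ∈ stripO) : strip ∈ 𝓝 p :=
  mem_of_superset (isOpen_stripO.mem_nhds hp) stripO_subset_strip

lemma uniqueDiffOn_strip : UniqueDiffOn ℝ strip := by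
  have hconv : Convex ℝ strip := by
    have : strip = (univ : Set ℝ) ×ˢ Icc 0 1 := by ext; simp [strip]
    exact this ▸ convex_univ.prod (convex_Icc 0 1)
  refine uniqueDiffOn_convex hconv ⟨((0 : ℝ), (1 / 2 : ℝ)), ?_⟩
  exact isOpen_stripO.subset_interior_iff.2 stripO_subset_strip (by norm_num [stripO])

section PartialDerivatives

variable {f g : ℝ × ℝ → ℝ} {p : ℝ × ℝ}

lemma pdx_eq_fderiv (hp : p ∈ stripO) : pdx f p = fderiv ℝ f p (1, 0) := by
  rw [pdx, fderivWithin_of_mem_nhds (strip_mem_nhds hp)]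

lemma pdy_eq_fderiv (hp : p ∈ stripO) : pdy f p = fderiv ℝ f p (0, 1) := by
  rw [pdy, fderivWithin_of_mem_nhds (strip_mem_nhds hp)]

lemma pdx_congr (hp : p ∈ stripO) (h : f =ᶠ[𝓝 p] g) : pdx f p = pdx g p := by
  rw [pdx_eq_fderiv hp, pdx_eq_fderiv hp, h.fderiv_eq]

lemma pdy_congr (hp : p ∈ stripO) (h : f =ᶠ[𝓝 p] g) : pdy f p = pdy g p := by
  rw [pdy_eq_fderiv hp, pdy_eq_fderiv hp, h.fderiv_eq]

lemma hasDerivAt_pdx (hf : ContDiffOn ℝ 1 f strip) (hp : p ∈ stripO) :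
    HasDerivAt (fun s => f (s, p.2)) (pdx f p) p.1 := by
  have hline : HasDerivAt (fun s : ℝ => (s, p.2)) ((1 : ℝ), (0 : ℝ)) p.1 :=
    (hasDerivAt_id p.1).prodMk (hasDerivAt_const p.1 p.2)
  rw [pdx_eq_fderiv hp]
  exact ((hf.contDiffAt (strip_mem_nhds hp)).differentiableAt one_ne_zero).hasFDerivAt
    |>.comp_hasDerivAt p.1 hline

lemma hasDerivAt_pdy (hf : ContDiffOn ℝ 1 f strip) (hp : p ∈ stripO) :
    HasDerivAt (fun t => f (p.1, t)) (pdy f p) p.2 := by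
  have hline : HasDerivAt (fun t : ℝ => (p.1, t)) ((0 : ℝ), (1 : ℝ)) p.2 :=
    (hasDerivAt_const p.2 p.1).prodMk (hasDerivAt_id p.2)
  rw [pdy_eq_fderiv hp]
  exact ((hf.contDiffAt (strip_mem_nhds hp)).differentiableAt one_ne_zero).hasFDerivAt
    |>.comp_hasDerivAt p.2 hline

lemma pdx_eq_of_hasDerivAt {D : ℝ} (hf : ContDiffOn ℝ 1 f strip) (hp : p ∈ stripO)
    (h : HasDerivAt (fun s => f (s, p.2)) D p.1) : pdx f p = D :=
  (hasDerivAt_pdx hf hp).unique h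

lemma pdy_eq_of_hasDerivAt {D : ℝ} (hf : ContDiffOn ℝ 1 f strip) (hp : p ∈ stripO)
    (h : HasDerivAt (fun t => f (p.1, t)) D p.2) : pdy f p = D :=
  (hasDerivAt_pdy hf hp).unique h

lemma ContDiffOn.contDiffOn_pdx {n : ℕ} (hf : ContDiffOn ℝ (n + 1) f strip) :
    ContDiffOn ℝ n (pdx f) strip :=
  (ContinuousLinearMap.apply ℝ ℝ ((1 : ℝ), (0 : ℝ))).contDiff.comp_contDiffOn
    (hf.fderivWithin uniqueDiffOn_strip le_rfl)

lemma ContDiffOn.contDiffOn_pdy {n : ℕ} (hf : ContDiffOn ℝ (n + 1) f strip) :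
    ContDiffOn ℝ n (pdy f) strip :=
  (ContinuousLinearMap.apply ℝ ℝ ((0 : ℝ), (1 : ℝ))).contDiff.comp_contDiffOn
    (hf.fderivWithin uniqueDiffOn_strip le_rfl)

lemma ContDiffOn.continuousOn_pdx (hf : ContDiffOn ℝ 1 f strip) : ContinuousOn (pdx f) strip :=
  (ContinuousLinearMap.apply ℝ ℝ ((1 : ℝ), (0 : ℝ))).continuous.comp_continuousOn
    (hf.continuousOn_fderivWithin uniqueDiffOn_strip le_rfl)

lemma pdx_pdy_comm (hf : ContDiffOn ℝ 2 f strip) (hp : p ∈ stripO) :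
    pdx (pdy f) p = pdy (pdx f) p := by
  have hf2 : ContDiffAt ℝ 2 f p := hf.contDiffAt (strip_mem_nhds hp)
  have hD : HasFDerivAt (fderiv ℝ f) (fderiv ℝ (fderiv ℝ f) p) p :=
    ((hf2.fderiv_right le_rfl).differentiableAt one_ne_zero).hasFDerivAt
  have hsecond : ∀ v w : ℝ × ℝ,
      fderiv ℝ (fun q => fderivWithin ℝ f strip q v) p w = fderiv ℝ (fderiv ℝ f) p w v := by
    intro v w
    have hloc : (fun q => fderivWithin ℝ f strip q v) =ᶠ[𝓝 p] fun q => fderiv ℝ f q v :=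
      (isOpen_stripO.eventually_mem hp).mono fun q hq => by
        simp only [fderivWithin_of_mem_nhds (strip_mem_nhds hq)]
    have happly : HasFDerivAt (fun q => fderiv ℝ f q v)
        ((ContinuousLinearMap.apply ℝ ℝ v).comp (fderiv ℝ (fderiv ℝ f) p)) p :=
      (ContinuousLinearMap.apply ℝ ℝ v).hasFDerivAt.comp p hD
    rw [hloc.fderiv_eq, happly.fderiv]
    rfl
  rw [pdx_eq_fderiv hp, pdy_eq_fderiv hp]
  exact (hsecond _ _).trans ((hf2.isSymmSndFDerivAt (by simp) _ _).trans (hsecond _ _).symm)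

lemma pdx_eq_zero_of_forall_eq_zero (hf : DifferentiableOn ℝ f strip)
    (h0 : ∀ x, f (x, 0) = 0) (x : ℝ) : pdx f (x, 0) = 0 := by
  have hline : HasDerivWithinAt (fun s : ℝ => (s, (0 : ℝ))) ((1 : ℝ), (0 : ℝ)) univ x :=
    ((hasDerivAt_id x).prodMk (hasDerivAt_const x (0 : ℝ))).hasDerivWithinAt
  have hcomp := (hf _ ⟨le_rfl, zero_le_one⟩).hasFDerivWithinAt.comp_hasDerivWithinAt x hline
    fun s _ => ⟨le_rfl, zero_le_one⟩
  have hzero : HasDerivWithinAt (fun s : ℝ => f (s, 0)) 0 univ x := by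
    simpa only [h0] using hasDerivWithinAt_const x univ (0 : ℝ)
  exact (hcomp.hasDerivAt univ_mem).unique (hzero.hasDerivAt univ_mem)

end PartialDerivatives

/-- `P - i Q` is holomorphic in `R`: the pair `(P, -Q)` satisfies the Cauchy–Riemann equations
there, and both functions are `C¹` up to the boundary. -/
structure IsConjugatePair (P Q : ℝ × ℝ → ℝ) : Prop where
  contDiffOn_fst : ContDiffOn ℝ 1 P strip
  contDiffOn_snd : ContDiffOn ℝ 1 Q strip
  pdy_fst : ∀ p ∈ stripO, pdy P p = pdx Q p
  pdy_snd : ∀ p ∈ stripO, pdy Q p = - pdx P p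

namespace IsConjugatePair

variable {P Q P' Q' : ℝ × ℝ → ℝ}

lemma add (h : IsConjugatePair P Q) (h' : IsConjugatePair P' Q') :
    IsConjugatePair (fun q => P q + P' q) (fun q => Q q + Q' q) := by
  have hP := h.contDiffOn_fst.add h'.contDiffOn_fst
  have hQ := h.contDiffOn_snd.add h'.contDiffOn_snd
  refine ⟨hP, hQ, fun p hp => ?_, fun p hp => ?_⟩
  · rw [pdy_eq_of_hasDerivAt hP hp
      ((hasDerivAt_pdy h.contDiffOn_fst hp).add (hasDerivAt_pdy h'.contDiffOn_fst hp)),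
      pdx_eq_of_hasDerivAt hQ hp
      ((hasDerivAt_pdx h.contDiffOn_snd hp).add (hasDerivAt_pdx h'.contDiffOn_snd hp)),
      h.pdy_fst p hp, h'.pdy_fst p hp]
  · rw [pdy_eq_of_hasDerivAt hQ hp
      ((hasDerivAt_pdy h.contDiffOn_snd hp).add (hasDerivAt_pdy h'.contDiffOn_snd hp)),
      pdx_eq_of_hasDerivAt hP hp
      ((hasDerivAt_pdx h.contDiffOn_fst hp).add (hasDerivAt_pdx h'.contDiffOn_fst hp)),
      h.pdy_snd p hp, h'.pdy_snd p hp, neg_add]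

lemma const_mul (h : IsConjugatePair P Q) (c : ℝ) :
    IsConjugatePair (fun q => c * P q) (fun q => c * Q q) := by
  have hP := (contDiffOn_const (c := c)).mul h.contDiffOn_fst
  have hQ := (contDiffOn_const (c := c)).mul h.contDiffOn_snd
  refine ⟨hP, hQ, fun p hp => ?_, fun p hp => ?_⟩
  · rw [pdy_eq_of_hasDerivAt hP hp ((hasDerivAt_pdy h.contDiffOn_fst hp).const_mul c),
      pdx_eq_of_hasDerivAt hQ hp ((hasDerivAt_pdx h.contDiffOn_snd hp).const_mul c),
      h.pdy_fst p hp]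
  · rw [pdy_eq_of_hasDerivAt hQ hp ((hasDerivAt_pdy h.contDiffOn_snd hp).const_mul c),
      pdx_eq_of_hasDerivAt hP hp ((hasDerivAt_pdx h.contDiffOn_fst hp).const_mul c),
      h.pdy_snd p hp, mul_neg]

lemma add_const (h : IsConjugatePair P Q) (c : ℝ) :
    IsConjugatePair P (fun q => Q q + c) := by
  have hQ := h.contDiffOn_snd.add (contDiffOn_const (c := c))
  refine ⟨h.contDiffOn_fst, hQ, fun p hp => ?_, fun p hp => ?_⟩
  · rw [pdx_eq_of_hasDerivAt hQ hp ((hasDerivAt_pdx h.contDiffOn_snd hp).add_const c),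
      h.pdy_fst p hp]
  · rw [pdy_eq_of_hasDerivAt hQ hp ((hasDerivAt_pdy h.contDiffOn_snd hp).add_const c),
      h.pdy_snd p hp]

end IsConjugatePair

lemma isConjugatePair_pdx_pdy {f : ℝ × ℝ → ℝ} (hf : ContDiffOn ℝ 2 f strip)
    (hH : ∀ p ∈ stripO, pdx (pdx f) p + pdy (pdy f) p = 0) :
    IsConjugatePair (pdx f) (pdy f) :=
  ⟨hf.contDiffOn_pdx, hf.contDiffOn_pdy, fun _ hp => (pdx_pdy_comm hf hp).symm,
    fun p hp => eq_neg_of_add_eq_zero_right (hH p hp)⟩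

/-- With `A = u₁ - i u₂` and `B = v₁ - i v₂`, `fluxTerm u₁ u₂ v₁ v₂ = -Im (B² / A)` and
`fluxTerm u₂ u₁ v₂ v₁ = Re (B² / A)`. -/
noncomputable def fluxTerm (u₁ u₂ v₁ v₂ : ℝ) : ℝ :=
  (u₂ * (v₂ ^ 2 - v₁ ^ 2) + 2 * u₁ * v₁ * v₂) / (u₁ ^ 2 + u₂ ^ 2)

noncomputable def fluxTermDeriv (u₁ u₂ v₁ v₂ U₁ U₂ V₁ V₂ : ℝ) : ℝ :=
  ((U₂ * (v₂ ^ 2 - v₁ ^ 2) + u₂ * (2 * v₂ * V₂ - 2 * v₁ * V₁)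
      + 2 * (U₁ * v₁ * v₂ + u₁ * V₁ * v₂ + u₁ * v₁ * V₂)) * (u₁ ^ 2 + u₂ ^ 2)
    - (u₂ * (v₂ ^ 2 - v₁ ^ 2) + 2 * u₁ * v₁ * v₂) * (2 * u₁ * U₁ + 2 * u₂ * U₂))
  / (u₁ ^ 2 + u₂ ^ 2) ^ 2

lemma HasDerivAt.fluxTerm {u₁ u₂ v₁ v₂ : ℝ → ℝ} {U₁ U₂ V₁ V₂ x : ℝ}
    (hu₁ : HasDerivAt u₁ U₁ x) (hu₂ : HasDerivAt u₂ U₂ x)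
    (hv₁ : HasDerivAt v₁ V₁ x) (hv₂ : HasDerivAt v₂ V₂ x) (hden : u₁ x ^ 2 + u₂ x ^ 2 ≠ 0) :
    HasDerivAt (fun s => fluxTerm (u₁ s) (u₂ s) (v₁ s) (v₂ s))
      (fluxTermDeriv (u₁ x) (u₂ x) (v₁ x) (v₂ x) U₁ U₂ V₁ V₂) x := by
  have hnum := (hu₂.fun_mul ((hv₂.fun_pow 2).fun_sub (hv₁.fun_pow 2))).fun_add
    ((((hasDerivAt_const x (2 : ℝ)).fun_mul hu₁).fun_mul hv₁).fun_mul hv₂)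
  refine (hnum.fun_div ((hu₁.fun_pow 2).fun_add (hu₂.fun_pow 2)) hden).congr_deriv ?_
  simp only [fluxTermDeriv, Nat.cast_ofNat, Nat.add_one_sub_one, pow_one]
  ring

-- The two swap identities are the Cauchy–Riemann equations of `B² / A` expressed through those
-- of `A` and `B`.
lemma fluxTermDeriv_swap {u₁ u₂ v₁ v₂ a b c d : ℝ} (h : u₁ ^ 2 + u₂ ^ 2 ≠ 0) :
    fluxTermDeriv u₁ u₂ v₁ v₂ a b c d = fluxTermDeriv u₂ u₁ v₂ v₁ (-a) b (-c) d := by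
  have h' : u₂ ^ 2 + u₁ ^ 2 ≠ 0 := by rwa [add_comm]
  simp only [fluxTermDeriv]
  field_simp
  ring

lemma fluxTermDeriv_swap_neg {u₁ u₂ v₁ v₂ a b c d : ℝ} (h : u₁ ^ 2 + u₂ ^ 2 ≠ 0) :
    fluxTermDeriv u₁ u₂ v₁ v₂ b (-a) d (-c) = -fluxTermDeriv u₂ u₁ v₂ v₁ b a d c := by
  have h' : u₂ ^ 2 + u₁ ^ 2 ≠ 0 := by rwa [add_comm]
  simp only [fluxTermDeriv]
  field_simp
  ring

lemma ContDiffOn.fluxTerm {u₁ u₂ v₁ v₂ : ℝ × ℝ → ℝ} {s : Set (ℝ × ℝ)} {n : WithTop ℕ∞}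
    (hu₁ : ContDiffOn ℝ n u₁ s) (hu₂ : ContDiffOn ℝ n u₂ s)
    (hv₁ : ContDiffOn ℝ n v₁ s) (hv₂ : ContDiffOn ℝ n v₂ s)
    (hden : ∀ q ∈ s, u₁ q ^ 2 + u₂ q ^ 2 ≠ 0) :
    ContDiffOn ℝ n (fun q => fluxTerm (u₁ q) (u₂ q) (v₁ q) (v₂ q)) s :=
  ((hu₂.mul ((hv₂.pow 2).sub (hv₁.pow 2))).add
    (((contDiffOn_const.mul hu₁).mul hv₁).mul hv₂)).div ((hu₁.pow 2).add (hu₂.pow 2)) hden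

/-- If `A = a₁ - i a₂` and `B = b₁ - i b₂` are holomorphic and `A` does not vanish,
then so is `B² / A`. -/
lemma IsConjugatePair.fluxTerm {a₁ a₂ b₁ b₂ : ℝ × ℝ → ℝ} (hA : IsConjugatePair a₁ a₂)
    (hB : IsConjugatePair b₁ b₂) (hden : ∀ q ∈ strip, a₁ q ^ 2 + a₂ q ^ 2 ≠ 0) :
    IsConjugatePair (fun q => fluxTerm (a₂ q) (a₁ q) (b₂ q) (b₁ q))
      (fun q => fluxTerm (a₁ q) (a₂ q) (b₁ q) (b₂ q)) := by
  obtain ⟨ha₁, ha₂, hA₁, hA₂⟩ := hA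
  obtain ⟨hb₁, hb₂, hB₁, hB₂⟩ := hB
  have hden' : ∀ q ∈ strip, a₂ q ^ 2 + a₁ q ^ 2 ≠ 0 := fun q hq => by
    rw [add_comm]; exact hden q hq
  have hP := ha₂.fluxTerm ha₁ hb₂ hb₁ hden'
  have hQ := ha₁.fluxTerm ha₂ hb₁ hb₂ hden
  refine ⟨hP, hQ, fun p hp => ?_, fun p hp => ?_⟩
  · have hd := hden p (stripO_subset_strip hp)
    have hd' := hden' p (stripO_subset_strip hp)
    rw [pdy_eq_of_hasDerivAt hP hp ((hasDerivAt_pdy ha₂ hp).fluxTerm (hasDerivAt_pdy ha₁ hp)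
        (hasDerivAt_pdy hb₂ hp) (hasDerivAt_pdy hb₁ hp) hd'),
      pdx_eq_of_hasDerivAt hQ hp ((hasDerivAt_pdx ha₁ hp).fluxTerm (hasDerivAt_pdx ha₂ hp)
        (hasDerivAt_pdx hb₁ hp) (hasDerivAt_pdx hb₂ hp) hd),
      hA₁ p hp, hA₂ p hp, hB₁ p hp, hB₂ p hp, fluxTermDeriv_swap hd]
  · have hd := hden p (stripO_subset_strip hp)
    have hd' := hden' p (stripO_subset_strip hp)
    rw [pdy_eq_of_hasDerivAt hQ hp ((hasDerivAt_pdy ha₁ hp).fluxTerm (hasDerivAt_pdy ha₂ hp)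
        (hasDerivAt_pdy hb₁ hp) (hasDerivAt_pdy hb₂ hp) hd),
      pdx_eq_of_hasDerivAt hP hp ((hasDerivAt_pdx ha₂ hp).fluxTerm (hasDerivAt_pdx ha₁ hp)
        (hasDerivAt_pdx hb₂ hp) (hasDerivAt_pdx hb₁ hp) hd'),
      hA₁ p hp, hA₂ p hp, hB₁ p hp, hB₂ p hp, fluxTermDeriv_swap_neg hd]

noncomputable def verticalPrimitive (F : ℝ × ℝ → ℝ) (q : ℝ × ℝ) : ℝ :=
  ∫ t in (0 : ℝ)..q.2, F (q.1, t)

section VerticalPrimitive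

open Interval

variable {F G : ℝ × ℝ → ℝ} {p : ℝ × ℝ}

lemma ContinuousOn.comp_vertical (hF : ContinuousOn F strip) (x : ℝ) :
    ContinuousOn (fun t => F (x, t)) (Icc 0 1) :=
  hF.comp (Continuous.continuousOn (by fun_prop)) fun _ ht => ht

lemma uIcc_zero_subset_Icc_of_mem_stripO (hp : p ∈ stripO) : uIcc 0 p.2 ⊆ Icc 0 1 :=
  uIcc_subset_Icc (left_mem_Icc.2 zero_le_one) (Ioo_subset_Icc_self hp)

lemma hasDerivAt_verticalPrimitive_snd (hF : ContinuousOn F strip) (hp : p ∈ stripO) :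
    HasDerivAt (fun y => verticalPrimitive F (p.1, y)) (F p) p.2 := by
  have hcont := hF.comp_vertical p.1
  exact intervalIntegral.integral_hasDerivAt_right
    ((hcont.mono (uIcc_zero_subset_Icc_of_mem_stripO hp)).intervalIntegrable)
    ((hcont.mono Ioo_subset_Icc_self).stronglyMeasurableAtFilter isOpen_Ioo _ hp)
    ((hcont.mono Ioo_subset_Icc_self).continuousAt (isOpen_Ioo.mem_nhds hp))

lemma hasDerivAt_verticalPrimitive_fst (hF : ContDiffOn ℝ 1 F strip) (hp : p ∈ stripO) :
    HasDerivAt (fun x => verticalPrimitive F (x, p.2))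
      (∫ t in (0 : ℝ)..p.2, pdx F (p.1, t)) p.1 := by
  have hIcc := uIcc_zero_subset_Icc_of_mem_stripO hp
  have hIoc : Ι (0 : ℝ) p.2 ⊆ Icc 0 1 := uIoc_subset_uIcc.trans hIcc
  obtain ⟨C, hC⟩ := (isCompact_closedBall p.1 1 |>.prod isCompact_Icc).exists_bound_of_continuousOn
    (hF.continuousOn_pdx.mono fun q hq => (mem_prod.1 hq).2)
  refine (intervalIntegral.hasDerivAt_integral_of_dominated_loc_of_deriv_le (bound := fun _ => C)
    (Metric.ball_mem_nhds p.1 one_pos)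
    (Eventually.of_forall fun x =>
      ((hF.continuousOn.comp_vertical x).mono hIoc).aestronglyMeasurable measurableSet_uIoc)
    ((hF.continuousOn.comp_vertical p.1).mono hIcc).intervalIntegrable
    (((hF.continuousOn_pdx.comp_vertical p.1).mono hIoc).aestronglyMeasurable measurableSet_uIoc)
    (Eventually.of_forall fun t ht x hx => hC (x, t) ⟨Metric.ball_subset_closedBall hx, hIoc ht⟩)
    intervalIntegrable_const
    (Eventually.of_forall fun t ht x _ => ?_)).2
  rw [uIoc_of_le hp.1.le] at ht
  exact hasDerivAt_pdx (p := (x, t)) hF ⟨ht.1, ht.2.trans_lt hp.2⟩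

namespace IsConjugatePair

variable (h : IsConjugatePair G F) (hG₀ : ∀ x, G (x, 0) = 0)
include h hG₀

lemma integral_pdx_eq (hp : p ∈ stripO) : ∫ t in (0 : ℝ)..p.2, pdx F (p.1, t) = G p := by
  rw [intervalIntegral.integral_eq_sub_of_hasDeriv_right_of_le hp.1.le
      ((h.contDiffOn_fst.continuousOn.comp_vertical p.1).mono (Icc_subset_Icc_right hp.2.le))
      (fun t ht => ?_)
      ((h.contDiffOn_snd.continuousOn_pdx.comp_vertical p.1).mono
        (uIcc_zero_subset_Icc_of_mem_stripO hp)).intervalIntegrable,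
    hG₀, sub_zero]
  have htp : (p.1, t) ∈ stripO := ⟨ht.1, ht.2.trans hp.2⟩
  rw [← h.pdy_fst _ htp]
  exact (hasDerivAt_pdy (p := (p.1, t)) h.contDiffOn_fst htp).hasDerivWithinAt

lemma hasFDerivAt_verticalPrimitive (hp : p ∈ stripO) :
    HasFDerivAt (verticalPrimitive F)
      (G p • ContinuousLinearMap.fst ℝ ℝ ℝ + F p • ContinuousLinearMap.snd ℝ ℝ ℝ) p := by
  have hcont : ∀ {f : ℝ × ℝ → ℝ}, ContinuousOn f strip →
      ContinuousAt (fun q => ContinuousLinearMap.toSpanSingleton ℝ (f q)) p := fun hf =>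
    (ContinuousLinearMap.toSpanSingletonCLE (𝕜 := ℝ) (E := ℝ)).continuous.continuousAt.comp
      (hf.continuousAt (strip_mem_nhds hp))
  have hstrict := hasStrictFDerivAt_uncurry_coprod (f := fun x y => verticalPrimitive F (x, y))
    (f₁ := fun x y => ContinuousLinearMap.toSpanSingleton ℝ (G (x, y)))
    (f₂ := fun x y => ContinuousLinearMap.toSpanSingleton ℝ (F (x, y)))
    ((isOpen_stripO.eventually_mem hp).mono fun q hq => by
      have := (hasDerivAt_verticalPrimitive_fst h.contDiffOn_snd hq).hasFDerivAt
      rwa [h.integral_pdx_eq hG₀ hq] at this)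
    ((isOpen_stripO.eventually_mem hp).mono fun q hq =>
      (hasDerivAt_verticalPrimitive_snd h.contDiffOn_snd.continuousOn hq).hasFDerivAt)
    (hcont h.contDiffOn_fst.continuousOn) (hcont h.contDiffOn_snd.continuousOn)
  refine hstrict.hasFDerivAt.congr_fderiv ?_
  ext <;> simp [Function.HasUncurry.uncurry]

lemma contDiffOn_verticalPrimitive : ContDiffOn ℝ 2 (verticalPrimitive F) stripO := by
  have hderiv := fun q (hq : q ∈ stripO) => h.hasFDerivAt_verticalPrimitive hG₀ hq
  rw [show (2 : WithTop ℕ∞) = 1 + 1 by norm_num, contDiffOn_succ_iff_fderiv_of_isOpen isOpen_stripO]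
  refine ⟨fun q hq => (hderiv q hq).differentiableAt.differentiableWithinAt, by simp, ?_⟩
  exact (((h.contDiffOn_fst.mono stripO_subset_strip).smul contDiffOn_const).add
    ((h.contDiffOn_snd.mono stripO_subset_strip).smul contDiffOn_const)).congr
    fun q hq => (hderiv q hq).fderiv

lemma pdx_verticalPrimitive (hp : p ∈ stripO) : pdx (verticalPrimitive F) p = G p := by
  simp [pdx_eq_fderiv hp, (h.hasFDerivAt_verticalPrimitive hG₀ hp).fderiv]

lemma pdy_verticalPrimitive (hp : p ∈ stripO) : pdy (verticalPrimitive F) p = F p := by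
  simp [pdy_eq_fderiv hp, (h.hasFDerivAt_verticalPrimitive hG₀ hp).fderiv]

lemma laplacian_verticalPrimitive (hp : p ∈ stripO) :
    pdx (pdx (verticalPrimitive F)) p + pdy (pdy (verticalPrimitive F)) p = 0 := by
  have hnhds := isOpen_stripO.eventually_mem hp
  rw [pdx_congr hp (hnhds.mono fun q hq => h.pdx_verticalPrimitive hG₀ hq),
    pdy_congr hp (hnhds.mono fun q hq => h.pdy_verticalPrimitive hG₀ hq),
    h.pdy_snd p hp, add_neg_cancel]

end IsConjugatePair

end VerticalPrimitive

theorem stmt_14_general (γ ε₁ : ℝ)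
    (η ζ ϑ : ℝ × ℝ → ℝ)
    (hηC : ContDiffOn ℝ 2 η strip) (hζC : ContDiffOn ℝ 2 ζ strip)
    (hϑC : ContDiffOn ℝ 2 ϑ strip)
    (hηH : ∀ p ∈ stripO, pdx (pdx η) p + pdy (pdy η) p = 0)
    (hζH : ∀ p ∈ stripO, pdx (pdx ζ) p + pdy (pdy ζ) p = 0)
    (hϑH : ∀ p ∈ stripO, pdx (pdx ϑ) p + pdy (pdy ϑ) p = 0)
    (hB : ∀ x : ℝ, η (x, 0) = 0 ∧ ζ (x, 0) = 0 ∧ ϑ (x, 0) = 0)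
    (hgrad : ∀ p ∈ strip, 0 < (pdx η p) ^ 2 + (pdy η p) ^ 2) :
    let Φ : ℝ × ℝ → ℝ := fun p =>
      ∫ t in (0 : ℝ)..p.2,
        ((pdy η (p.1, t) * ((pdy ζ (p.1, t)) ^ 2 - (pdx ζ (p.1, t)) ^ 2)
            + 2 * pdx η (p.1, t) * pdx ζ (p.1, t) * pdy ζ (p.1, t))
          / ((pdx η (p.1, t)) ^ 2 + (pdy η (p.1, t)) ^ 2)
        + ε₁ * ((pdy η (p.1, t) * ((pdy ϑ (p.1, t)) ^ 2 - (pdx ϑ (p.1, t)) ^ 2)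
            + 2 * pdx η (p.1, t) * pdx ϑ (p.1, t) * pdy ϑ (p.1, t))
          / ((pdx η (p.1, t)) ^ 2 + (pdy η (p.1, t)) ^ 2))
        + (1 - γ ^ 2) * pdy η (p.1, t) + 2 * (γ - 1 - ε₁ / 2))
    (ContDiffOn ℝ 2 Φ stripO ∧
      ∀ p ∈ stripO, pdx (pdx Φ) p + pdy (pdy Φ) p = 0) ∧
    (∀ x : ℝ, Φ (x, 0) = 0) := by
  intro Φ
  have hη := isConjugatePair_pdx_pdy hηC hηH
  have hden : ∀ q ∈ strip, pdx η q ^ 2 + pdy η q ^ 2 ≠ 0 := fun q hq => (hgrad q hq).ne'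
  have hpair := (((hη.fluxTerm (isConjugatePair_pdx_pdy hζC hζH) hden).add
    ((hη.fluxTerm (isConjugatePair_pdx_pdy hϑC hϑH) hden).const_mul ε₁)).add
    (hη.const_mul (1 - γ ^ 2))).add_const (2 * (γ - 1 - ε₁ / 2))
  have hG₀ : ∀ x : ℝ, fluxTerm (pdy η (x, 0)) (pdx η (x, 0)) (pdy ζ (x, 0)) (pdx ζ (x, 0))
      + ε₁ * fluxTerm (pdy η (x, 0)) (pdx η (x, 0)) (pdy ϑ (x, 0)) (pdx ϑ (x, 0))
      + (1 - γ ^ 2) * pdx η (x, 0) = 0 := fun x => by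
    simp [fluxTerm,
      pdx_eq_zero_of_forall_eq_zero (hηC.differentiableOn two_ne_zero) (fun x => (hB x).1),
      pdx_eq_zero_of_forall_eq_zero (hζC.differentiableOn two_ne_zero) (fun x => (hB x).2.1),
      pdx_eq_zero_of_forall_eq_zero (hϑC.differentiableOn two_ne_zero) (fun x => (hB x).2.2)]
  -- `Φ` is `verticalPrimitive` of the second component of `hpair` once `fluxTerm` is unfolded.
  exact ⟨⟨hpair.contDiffOn_verticalPrimitive hG₀,
    fun p hp => hpair.laplacian_verticalPrimitive hG₀ hp⟩, fun x => intervalIntegral.integral_same⟩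

/-- Harmonicity of the flow force flux function: if `η, ζ, ϑ` are `C²` on the closed
strip, harmonic in `R`, vanish on `B`, and `∇η` is nonvanishing, then
`Φ(x,y) = ∫₀^y [(η_y(ζ_y² − ζ_x²) + 2η_xζ_xζ_y)/(η_x² + η_y²)
  + ε₁(η_y(ϑ_y² − ϑ_x²) + 2η_xϑ_xϑ_y)/(η_x² + η_y²) + (1 − γ²)η_y + 2(γ − 1 − ε₁/2)] dt`
is harmonic in `R` and vanishes on `B`. -/
theorem stmt_14 (γ ε₁ : ℝ) (hε₁ : 0 < ε₁)
    (η ζ ϑ : ℝ × ℝ → ℝ)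
    (hηC : ContDiffOn ℝ 2 η strip) (hζC : ContDiffOn ℝ 2 ζ strip)
    (hϑC : ContDiffOn ℝ 2 ϑ strip)
    (hηH : ∀ p ∈ stripO, pdx (pdx η) p + pdy (pdy η) p = 0)
    (hζH : ∀ p ∈ stripO, pdx (pdx ζ) p + pdy (pdy ζ) p = 0)
    (hϑH : ∀ p ∈ stripO, pdx (pdx ϑ) p + pdy (pdy ϑ) p = 0)
    (hB : ∀ x : ℝ, η (x, 0) = 0 ∧ ζ (x, 0) = 0 ∧ ϑ (x, 0) = 0)
    (hgrad : ∀ p ∈ strip, 0 < (pdx η p) ^ 2 + (pdy η p) ^ 2) :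
    let Φ : ℝ × ℝ → ℝ := fun p =>
      ∫ t in (0 : ℝ)..p.2,
        ((pdy η (p.1, t) * ((pdy ζ (p.1, t)) ^ 2 - (pdx ζ (p.1, t)) ^ 2)
            + 2 * pdx η (p.1, t) * pdx ζ (p.1, t) * pdy ζ (p.1, t))
          / ((pdx η (p.1, t)) ^ 2 + (pdy η (p.1, t)) ^ 2)
        + ε₁ * ((pdy η (p.1, t) * ((pdy ϑ (p.1, t)) ^ 2 - (pdx ϑ (p.1, t)) ^ 2)
            + 2 * pdx η (p.1, t) * pdx ϑ (p.1, t) * pdy ϑ (p.1, t))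
          / ((pdx η (p.1, t)) ^ 2 + (pdy η (p.1, t)) ^ 2))
        + (1 - γ ^ 2) * pdy η (p.1, t) + 2 * (γ - 1 - ε₁ / 2))
    (ContDiffOn ℝ 2 Φ stripO ∧
      ∀ p ∈ stripO, pdx (pdx Φ) p + pdy (pdy Φ) p = 0) ∧
    (∀ x : ℝ, Φ (x, 0) = 0) :=
  stmt_14_general γ ε₁ η ζ ϑ hηC hζC hϑC hηH hζH hϑH hB hgrad
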